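/- Characterization of stationary states (Lemma 3.3): for every two-species distribution ρ and nonnegative mobility values m^{(i)}_{ικ} ≥ 0, the balance equations ∑_{κ=1}^{N} m^{(i)}_{ικ} [(v^{(i)}_{ικ})_+]^{q−1} η_{ικ} μ_κ = ∑_{κ=1}^{N} m^{(i)}_{κι} [(v^{(i)}_{ικ})_−]^{q−1} η_{ικ} μ_κ hold for all ι = 1,…,N and both i = 1,2 (equivalently, R^{(i)}_ι = 0 for all ι and i) if and only if m^{(i)}_{ικ} · (v^{(i)}_{ικ})_+ = 0 for all ι,κ with η_{ικ} > 0 and both i = 1,2. -/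
import Mathlib


open Finset

/-- The upwind velocity `v^{(i)}_{ικ}` of the graph dynamics. -/
noncomputable def velGG {N d : ℕ} (x : Fin N → EuclideanSpace ℝ (Fin d)) (μ : Fin N → ℝ)
    (K : Fin 2 → Fin 2 → EuclideanSpace ℝ (Fin d) → EuclideanSpace ℝ (Fin d) → ℝ)
    (β : Fin 2 → ℝ) (ρ : Fin 2 → Fin N → ℝ) (i : Fin 2) (ι κ : Fin N) : ℝ :=
  β i * ∑ k : Fin 2, ∑ l : Fin N, (K i k (x ι) (x l) - K i k (x κ) (x l)) * ρ k l * μ l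

/-- The upwind right-hand side `R^{(i)}_ι` of the graph dynamics; `a₊ = max a 0` and
`a₋ = max (−a) 0`, and powers are real powers. -/
noncomputable def rhsGG {N d : ℕ} (x : Fin N → EuclideanSpace ℝ (Fin d)) (μ : Fin N → ℝ)
    (K : Fin 2 → Fin 2 → EuclideanSpace ℝ (Fin d) → EuclideanSpace ℝ (Fin d) → ℝ)
    (β : Fin 2 → ℝ) (η : Fin N → Fin N → ℝ) (m : Fin 2 → Fin N → Fin N → ℝ) (q : ℝ)
    (ρ : Fin 2 → Fin N → ℝ) (i : Fin 2) (ι : Fin N) : ℝ :=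
  ∑ κ : Fin N,
    (m i κ ι * (max (-(velGG x μ K β ρ i ι κ)) 0) ^ (q - 1)
      - m i ι κ * (max (velGG x μ K β ρ i ι κ) 0) ^ (q - 1)) * η ι κ * μ κ

/-- A two-species distribution: nonnegative densities with total mass one for each species. -/
def IsDistGG {N : ℕ} (μ : Fin N → ℝ) (ρ : Fin 2 → Fin N → ℝ) : Prop :=
  (∀ i ι, 0 ≤ ρ i ι) ∧ ∀ i, ∑ ι : Fin N, ρ i ι * μ ι = 1

private lemma mul_max_rpow_aux {q : ℝ} (hq : 1 < q) (a : ℝ) :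
    a * (max a 0) ^ (q - 1) = (max a 0) ^ q := by
  rcases le_or_gt a 0 with h | h
  · rw [max_eq_right h, Real.zero_rpow (by linarith), Real.zero_rpow (by linarith), mul_zero]
  · rw [max_eq_left h.le]
    have h1 := Real.rpow_add h 1 (q - 1)
    rw [Real.rpow_one] at h1
    rw [← h1]
    congr 1
    ring

/-- Characterization of stationary states (Lemma 3.3): the balance equations hold at every
vertex for both species iff the upwind fluxes `m^{(i)}_{ικ} (v^{(i)}_{ικ})₊` vanish on all
edges with positive weight. -/
theorem stationary_state_characterization
    (N d : ℕ) (hN : 2 ≤ N) (hd : 1 ≤ d)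
    (x : Fin N → EuclideanSpace ℝ (Fin d)) (hx : Function.Injective x)
    (μ : Fin N → ℝ) (hμ : ∀ ι, 0 < μ ι)
    (K : Fin 2 → Fin 2 → EuclideanSpace ℝ (Fin d) → EuclideanSpace ℝ (Fin d) → ℝ)
    (hKcont : ∀ i k, Continuous fun p : EuclideanSpace ℝ (Fin d) × EuclideanSpace ℝ (Fin d) =>
      K i k p.1 p.2)
    (hKsym : ∀ i k p q, K i k p q = K i k q p)
    (hK12 : ∀ p q, K 0 1 p q = K 1 0 p q)
    (η : Fin N → Fin N → ℝ) (hη : ∀ ι κ, 0 ≤ η ι κ) (hηsym : ∀ ι κ, η ι κ = η κ ι)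
    (β : Fin 2 → ℝ) (hβ : ∀ i, 0 < β i)
    (q : ℝ) (hq : 1 < q)
    (m : Fin 2 → Fin N → Fin N → ℝ) (hm : ∀ i ι κ, 0 ≤ m i ι κ)
    (ρ : Fin 2 → Fin N → ℝ) (hρ : IsDistGG μ ρ) :
    (∀ i : Fin 2, ∀ ι : Fin N,
        ∑ κ : Fin N, m i ι κ * (max (velGG x μ K β ρ i ι κ) 0) ^ (q - 1) * η ι κ * μ κ
          = ∑ κ : Fin N,
              m i κ ι * (max (-(velGG x μ K β ρ i ι κ)) 0) ^ (q - 1) * η ι κ * μ κ)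
      ↔ (∀ i : Fin 2, ∀ ι κ : Fin N, 0 < η ι κ →
          m i ι κ * max (velGG x μ K β ρ i ι κ) 0 = 0) := by
  set P : Fin 2 → Fin N → ℝ :=
    fun i ι => β i * ∑ k : Fin 2, ∑ l : Fin N, K i k (x ι) (x l) * ρ k l * μ l with hP
  have hv : ∀ i ι κ, velGG x μ K β ρ i ι κ = P i ι - P i κ := by
    intro i ι κ
    simp only [velGG, hP]
    rw [← mul_sub, ← Finset.sum_sub_distrib]
    congr 1
    refine Finset.sum_congr rfl fun k _ => ?_
    rw [← Finset.sum_sub_distrib]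
    refine Finset.sum_congr rfl fun l _ => ?_
    ring
  have hanti : ∀ i ι κ, max (-(velGG x μ K β ρ i ι κ)) 0 = max (velGG x μ K β ρ i κ ι) 0 := by
    intro i ι κ
    rw [hv, hv]
    congr 1
    ring
  constructor
  · intro h i ι κ hpos
    -- key algebraic identity per edge
    have key : ∀ ι' κ' : Fin N,
        m i ι' κ' * (max (velGG x μ K β ρ i ι' κ') 0) ^ q * η ι' κ' * μ ι' * μ κ'
          = P i ι' * μ ι' *
              (m i ι' κ' * (max (velGG x μ K β ρ i ι' κ') 0) ^ (q - 1) * η ι' κ' * μ κ')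
            - P i κ' * μ κ' *
              (m i ι' κ' * (max (velGG x μ K β ρ i ι' κ') 0) ^ (q - 1) * η ι' κ' * μ ι') := by
      intro ι' κ'
      rw [← mul_max_rpow_aux hq (velGG x μ K β ρ i ι' κ')]
      rw [hv i ι' κ']
      ring
    have hzero : ∑ ι' : Fin N, ∑ κ' : Fin N,
        m i ι' κ' * (max (velGG x μ K β ρ i ι' κ') 0) ^ q * η ι' κ' * μ ι' * μ κ' = 0 := by
      simp_rw [key, Finset.sum_sub_distrib]
      have h2 : ∑ ι' : Fin N, ∑ κ' : Fin N, P i κ' * μ κ' *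
            (m i ι' κ' * (max (velGG x μ K β ρ i ι' κ') 0) ^ (q - 1) * η ι' κ' * μ ι')
          = ∑ ι' : Fin N, ∑ κ' : Fin N, P i ι' * μ ι' *
            (m i κ' ι' * (max (-(velGG x μ K β ρ i ι' κ')) 0) ^ (q - 1) * η ι' κ' * μ κ') := by
        rw [Finset.sum_comm]
        refine Finset.sum_congr rfl fun a _ => Finset.sum_congr rfl fun b _ => ?_
        rw [hanti i a b, hηsym b a]
      rw [h2, sub_eq_zero]
      refine Finset.sum_congr rfl fun ι' _ => ?_
      rw [← Finset.mul_sum, ← Finset.mul_sum, h i ι']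
    have hterm : ∀ ι' κ' : Fin N,
        0 ≤ m i ι' κ' * (max (velGG x μ K β ρ i ι' κ') 0) ^ q * η ι' κ' * μ ι' * μ κ' := by
      intro ι' κ'
      have h1 : 0 ≤ (max (velGG x μ K β ρ i ι' κ') 0) ^ q :=
        Real.rpow_nonneg (le_max_right _ _) q
      have := hm i ι' κ'
      have := hη ι' κ'
      have := (hμ ι').le
      have := (hμ κ').le
      positivity
    have h3 := (Finset.sum_eq_zero_iff_of_nonneg
      (fun ι' _ => Finset.sum_nonneg fun κ' _ => hterm ι' κ')).mp hzero ι (Finset.mem_univ ι)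
    have h4 := (Finset.sum_eq_zero_iff_of_nonneg
      (fun κ' _ => hterm ι κ')).mp h3 κ (Finset.mem_univ κ)
    have ha : m i ι κ * (max (velGG x μ K β ρ i ι κ) 0) ^ q = 0 := by
      by_contra hne
      have hanonneg : 0 ≤ m i ι κ * (max (velGG x μ K β ρ i ι κ) 0) ^ q :=
        mul_nonneg (hm i ι κ) (Real.rpow_nonneg (le_max_right _ _) q)
      have hapos := lt_of_le_of_ne hanonneg (Ne.symm hne)
      have := mul_pos (mul_pos (mul_pos hapos hpos) (hμ ι)) (hμ κ)
      linarith
    rcases mul_eq_zero.mp ha with hm0 | hp0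
    · rw [hm0, zero_mul]
    · have hmax : max (velGG x μ K β ρ i ι κ) 0 = 0 := by
        by_contra hmne
        have hmpos : 0 < max (velGG x μ K β ρ i ι κ) 0 :=
          lt_of_le_of_ne (le_max_right _ _) (Ne.symm hmne)
        exact absurd hp0 (Real.rpow_pos_of_pos hmpos q).ne'
      rw [hmax, mul_zero]
  · intro h i ι
    have hq1 : q - 1 ≠ 0 := by linarith
    have hL : ∀ κ : Fin N,
        m i ι κ * (max (velGG x μ K β ρ i ι κ) 0) ^ (q - 1) * η ι κ * μ κ = 0 := by
      intro κ
      rcases eq_or_lt_of_le (hη ι κ) with h0 | hpos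
      · rw [← h0, mul_zero, zero_mul]
      · rcases mul_eq_zero.mp (h i ι κ hpos) with hm0 | hv0
        · rw [hm0, zero_mul, zero_mul, zero_mul]
        · rw [hv0, Real.zero_rpow hq1, mul_zero, zero_mul, zero_mul]
    have hR : ∀ κ : Fin N,
        m i κ ι * (max (-(velGG x μ K β ρ i ι κ)) 0) ^ (q - 1) * η ι κ * μ κ = 0 := by
      intro κ
      rcases eq_or_lt_of_le (hη ι κ) with h0 | hpos
      · rw [← h0, mul_zero, zero_mul]
      · have hpos' : 0 < η κ ι := by rwa [← hηsym ι κ]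
        rw [hanti i ι κ]
        rcases mul_eq_zero.mp (h i κ ι hpos') with hm0 | hv0
        · rw [hm0, zero_mul, zero_mul, zero_mul]
        · rw [hv0, Real.zero_rpow hq1, mul_zero, zero_mul, zero_mul]
    rw [Finset.sum_eq_zero fun κ _ => hL κ, Finset.sum_eq_zero fun κ _ => hR κ]
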